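/- arXiv:1606.07690 — 2 statements merged into one kernel-verified Lean document; each statement's English description precedes it below -/
import Mathlib

section
/- Let K be a convex body in ℝ^n with 0 ∈ int K, let μ be a finite non-negative Borel measure on int K equivalent to Lebesgue measure on int K, and let x be a regular boundary point of K with unique outer unit normal N_x. Then for every ε > 0 there exists δ_ε > 0 such that for all 0 < δ < δ_ε: 0 ∈ int F^μ_δ K, and, with x^K_δ the unique point of bd F^μ_δ K on the ray pos{x}, the segment conv{x^K_δ, 0} equals F^μ_δ K ∩ pos{x} and also equals (⋂{ {y : y·v ≤ h_K(v) − s_δ(v)} : v ∈ S^{n-1}, d_s(v, N_x) < ε }) ∩ pos{x}, where s_δ(v) is uniquely determined by μ(K ∩ {y : y·v ≥ h_K(v) − s_δ(v)}) = δ^{(n+1)/2}. -/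
open MeasureTheory Filter
open scoped InnerProductSpace ENNReal Topology

noncomputable section

/-- The closed half-space `{y : ⟪y, v⟫ ≤ c}`. -/
def halfLe {n : ℕ} (v : EuclideanSpace ℝ (Fin n)) (c : ℝ) : Set (EuclideanSpace ℝ (Fin n)) :=
  {y | ⟪y, v⟫_ℝ ≤ c}

/-- The closed half-space `{y : ⟪y, v⟫ ≥ c}`. -/
def halfGe {n : ℕ} (v : EuclideanSpace ℝ (Fin n)) (c : ℝ) : Set (EuclideanSpace ℝ (Fin n)) :=
  {y | c ≤ ⟪y, v⟫_ℝ}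

/-- The support function `h_K(v) = sup {⟪x, v⟫ : x ∈ K}`. -/
def suppFn {n : ℕ} (K : Set (EuclideanSpace ℝ (Fin n))) (v : EuclideanSpace ℝ (Fin n)) : ℝ :=
  sSup ((fun x => ⟪x, v⟫_ℝ) '' K)

/-- The weighted floating body `F^μ_δ K`: the intersection of all half-spaces `H⁻` whose
complementary half-space `H⁺` cuts off a set of `μ`-measure at most `δ^((n+1)/2)` from `K`. -/
def floatBody {n : ℕ} (μ : Measure (EuclideanSpace ℝ (Fin n)))
    (K : Set (EuclideanSpace ℝ (Fin n))) (δ : ℝ) : Set (EuclideanSpace ℝ (Fin n)) :=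
  ⋂₀ {H | ∃ v c, ‖v‖ = 1 ∧
      μ (K ∩ halfGe v c) ≤ ENNReal.ofReal (δ ^ (((n : ℝ) + 1) / 2)) ∧ H = halfLe v c}

/-- The ray `pos{x} = {t • x : t ≥ 0}`. -/
def ray {n : ℕ} (x : EuclideanSpace ℝ (Fin n)) : Set (EuclideanSpace ℝ (Fin n)) :=
  {y | ∃ t : ℝ, 0 ≤ t ∧ y = t • x}

/-- The spherical distance `d_s(u,v) = arccos ⟪u, v⟫` on the unit sphere. -/
def sphDist {n : ℕ} (u v : EuclideanSpace ℝ (Fin n)) : ℝ := Real.arccos ⟪u, v⟫_ℝ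

/-! Caps of depth `σ > 0` have `μ`-measure bounded below uniformly in the unit direction
(compactness of the sphere, continuity of `h_K`), so for small `δ` every cap of measure
`δ^((n+1)/2)` has depth `s_δ(v) < σ`. Since `μ` charges every open subset of `int K`, that cap is
the deepest one of measure at most `δ^((n+1)/2)`, hence `F^μ_δ K` is the intersection of the
half-spaces `⟪y, v⟫ ≤ h_K(v) - s_δ(v)` and contains a fixed ball around `0`.
On the ray through `x`, the half-space with normal `N` already cuts the ray inside `[0, x]`.
For directions at spherical distance `≥ ε` from `N`, uniqueness of the normal and compactness
give `⟪x, v⟫ + η ≤ h_K(v)` with `η > 0`; once `σ ≤ η` these half-spaces contain `[0, x]`, so they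
do not affect `F^μ_δ K ∩ pos{x}`. The gauge of `F^μ_δ K` identifies this intersection with a
segment ending at the unique boundary point on the ray. -/

section Topology

theorem IsCompact.exists_pos_forall_le_of_eventually {X : Type*} [TopologicalSpace X]
    {S : Set X} (hS : IsCompact S) {f : X → ℝ≥0∞}
    (hf : ∀ x ∈ S, ∃ m > 0, ∀ᶠ y in 𝓝[S] x, m ≤ f y) :
    ∃ m > 0, ∀ x ∈ S, m ≤ f x := by
  refine hS.induction_on ⟨1, one_pos, fun _ h => h.elim⟩
    (fun s t hst ⟨m, hm, ht⟩ => ⟨m, hm, fun x hx => ht x (hst hx)⟩)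
    (fun s t ⟨m, hm, hs⟩ ⟨m', hm', ht⟩ => ⟨min m m', lt_min hm hm', ?_⟩) fun x hx => ?_
  · rintro x (hx | hx)
    exacts [min_le_of_left_le (hs x hx), min_le_of_right_le (ht x hx)]
  · obtain ⟨m, hm, hev⟩ := hf x hx
    exact ⟨_, hev, m, hm, fun _ hy => hy⟩

theorem measure_pos_of_isOpen_of_subset {X : Type*} [TopologicalSpace X] [MeasurableSpace X]
    [OpensMeasurableSpace X] {μ ν : Measure X} [ν.IsOpenPosMeasure] {S U : Set X}
    (hac : ν.restrict S ≪ μ.restrict S) (hU : IsOpen U) (hne : U.Nonempty) (hUS : U ⊆ S) :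
    0 < μ U := by
  have hνU : ν.restrict S U ≠ 0 := by
    rw [Measure.restrict_apply hU.measurableSet, Set.inter_eq_self_of_subset_left hUS]
    exact (hU.measure_pos ν hne).ne'
  exact pos_iff_ne_zero.2 fun hμU =>
    hνU (hac (nonpos_iff_eq_zero.1 (hμU ▸ Measure.restrict_apply_le S U)))

theorem exists_pos_le_forall_ofReal_rpow_lt {m : ℝ≥0∞} (hm : 0 < m) {e : ℝ} (he : 0 < e)
    {P : ℝ} (hP : 0 < P) : ∃ δε > 0, δε ≤ P ∧ ∀ δ ∈ Set.Ioo 0 δε, ENNReal.ofReal (δ ^ e) < m := by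
  have hlim := ENNReal.tendsto_ofReal (Real.continuousAt_rpow_const 0 e (Or.inr he.le)).tendsto
  rw [Real.zero_rpow he.ne', ENNReal.ofReal_zero] at hlim
  obtain ⟨u, hu, hsub⟩ :=
    mem_nhdsGT_iff_exists_Ioo_subset.1 (nhdsWithin_le_nhds (hlim (gt_mem_nhds hm)))
  exact ⟨min P u, lt_min hP hu, min_le_left _ _,
    fun δ hδ => hsub ⟨hδ.1, hδ.2.trans_le (min_le_right _ _)⟩⟩

end Topology

section Euclidean

variable {n : ℕ} {K : Set (EuclideanSpace ℝ (Fin n))} {v x y : EuclideanSpace ℝ (Fin n)}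

theorem isClosed_halfLe (v : EuclideanSpace ℝ (Fin n)) (c : ℝ) : IsClosed (halfLe v c) :=
  isClosed_le (by fun_prop) continuous_const

theorem convex_halfLe (v : EuclideanSpace ℝ (Fin n)) (c : ℝ) : Convex ℝ (halfLe v c) :=
  convex_halfSpace_le ⟨fun a b => inner_add_left a b v, fun r a => real_inner_smul_left a v r⟩ c

theorem halfGe_anti {c c' : ℝ} (h : c ≤ c') : halfGe v c' ⊆ halfGe v c :=
  fun _ hy => h.trans hy

theorem inner_le_suppFn (hK : IsCompact K) (hy : y ∈ K) (v : EuclideanSpace ℝ (Fin n)) :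
    ⟪y, v⟫_ℝ ≤ suppFn K v :=
  le_csSup (hK.image (by fun_prop)).bddAbove (Set.mem_image_of_mem _ hy)

theorem suppFn_le (hK : K.Nonempty) {c : ℝ} (h : ∀ y ∈ K, ⟪y, v⟫_ℝ ≤ c) : suppFn K v ≤ c :=
  csSup_le (hK.image _) (Set.forall_mem_image.2 h)

theorem continuous_suppFn (hK : IsCompact K) : Continuous (suppFn K) :=
  hK.continuous_sSup (f := fun v y : EuclideanSpace ℝ (Fin n) => ⟪y, v⟫_ℝ) (by fun_prop)

theorem le_suppFn_of_closedBall_subset {ρ : ℝ} (hK : IsCompact K)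
    (hρ : 0 ≤ ρ) (hρK : Metric.closedBall 0 ρ ⊆ K) (hv : ‖v‖ = 1) : ρ ≤ suppFn K v := by
  have hmem : ρ • v ∈ K := hρK (by simp [norm_smul, hv, abs_of_nonneg hρ])
  simpa [real_inner_smul_left, real_inner_self_eq_norm_sq, hv] using inner_le_suppFn hK hmem v

theorem inner_lt_suppFn_of_mem_interior (hK : IsCompact K) (hv : v ≠ 0)
    (hy : y ∈ interior K) : ⟪y, v⟫_ℝ < suppFn K v := by
  have hlim : Tendsto (fun t : ℝ => y + t • v) (𝓝[>] 0) (𝓝 y) := by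
    have : Continuous (fun t : ℝ => y + t • v) := by fun_prop
    simpa using (this.tendsto 0).mono_left nhdsWithin_le_nhds
  obtain ⟨t, hyt, ht⟩ :=
    ((hlim.eventually (isOpen_interior.mem_nhds hy)).and self_mem_nhdsWithin).exists
  calc ⟪y, v⟫_ℝ < ⟪y + t • v, v⟫_ℝ := by
        rw [inner_add_left, real_inner_smul_left]
        have := real_inner_self_pos.2 hv
        nlinarith [show (0:ℝ) < t from ht]
    _ ≤ suppFn K v := inner_le_suppFn hK (interior_subset hyt) v

theorem exists_mem_interior_inner_gt (hKc : Convex ℝ K) (hint : (interior K).Nonempty) {c : ℝ}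
    (hc : c < suppFn K v) : ∃ w ∈ interior K, c < ⟪w, v⟫_ℝ := by
  obtain ⟨_, ⟨y, hy, rfl⟩, hyc⟩ := exists_lt_of_lt_csSup (hint.mono interior_subset |>.image _) hc
  have hy' : y ∈ closure (interior K) :=
    hKc.closure_interior_eq_closure_of_nonempty_interior hint ▸ subset_closure hy
  obtain ⟨w, hwc, hw⟩ := mem_closure_iff.1 hy' {z | c < ⟪z, v⟫_ℝ}
    (isOpen_lt continuous_const (by fun_prop)) hyc
  exact ⟨w, hw, hwc⟩

theorem pos_of_measure_inter_halfGe_ne_zero {μ : Measure (EuclideanSpace ℝ (Fin n))}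
    (hK : IsCompact K) (hμ : μ (interior K)ᶜ = 0) (hv : v ≠ 0) {s : ℝ}
    (hs : μ (K ∩ halfGe v (suppFn K v - s)) ≠ 0) : 0 < s := by
  by_contra! hs0
  refine hs (measure_mono_null (t := (interior K)ᶜ) (fun y hy hyint => ?_) hμ)
  have := inner_lt_suppFn_of_mem_interior hK hv hyint
  have : suppFn K v - s ≤ ⟪y, v⟫_ℝ := hy.2
  linarith

theorem lt_of_measure_inter_halfGe_sub_lt {μ : Measure (EuclideanSpace ℝ (Fin n))} {s σ : ℝ}
    (h : μ (K ∩ halfGe v (suppFn K v - s)) < μ (K ∩ halfGe v (suppFn K v - σ))) : s < σ :=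
  lt_of_not_ge fun hσs => h.not_ge
    (measure_mono (Set.inter_subset_inter_right K (halfGe_anti (by linarith))))

theorem nonempty_interior_inter_inner_preimage_Ioo (hKc : Convex ℝ K)
    (h0K : (0 : EuclideanSpace ℝ (Fin n)) ∈ interior K) {a c : ℝ} (hac : a < c) (hc : 0 < c)
    (hcv : c < suppFn K v) : (interior K ∩ (fun y => ⟪y, v⟫_ℝ) ⁻¹' Set.Ioo a c).Nonempty := by
  obtain ⟨w, hw, hcw⟩ := exists_mem_interior_inner_gt hKc ⟨0, h0K⟩ hcv
  have hI : IsPreconnected ((fun y => ⟪y, v⟫_ℝ) '' interior K) :=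
    hKc.interior.isPreconnected.image _ (by fun_prop)
  have hmid : (max a 0 + c) / 2 ∈ Set.Icc 0 ⟪w, v⟫_ℝ := by
    constructor <;> linarith [le_max_right a 0, max_lt hac hc]
  obtain ⟨y, hy, hyv⟩ := hI.Icc_subset ⟨0, h0K, inner_zero_left _⟩ ⟨w, hw, rfl⟩ hmid
  refine ⟨y, hy, ?_⟩
  simp only [Set.mem_preimage, hyv, Set.mem_Ioo]
  constructor <;> linarith [le_max_left a 0, max_lt hac hc]

theorem le_of_measure_inter_halfGe_le {μ : Measure (EuclideanSpace ℝ (Fin n))}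
    [IsFiniteMeasure μ] (hKc : Convex ℝ K) (h0K : (0 : EuclideanSpace ℝ (Fin n)) ∈ interior K)
    (hac : volume.restrict (interior K) ≪ μ.restrict (interior K)) {a c : ℝ} (hc : 0 < c)
    (hcv : c < suppFn K v) (hle : μ (K ∩ halfGe v a) ≤ μ (K ∩ halfGe v c)) : c ≤ a := by
  by_contra! hac'
  set U := interior K ∩ (fun y => ⟪y, v⟫_ℝ) ⁻¹' Set.Ioo a c
  have hUo : IsOpen U := isOpen_interior.inter (isOpen_Ioo.preimage (by fun_prop))
  have hU : 0 < μ U := measure_pos_of_isOpen_of_subset hac hUo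
    (nonempty_interior_inter_inner_preimage_Ioo hKc h0K hac' hc hcv) Set.inter_subset_left
  have hdisj : Disjoint (K ∩ halfGe v c) U :=
    Set.disjoint_left.2 fun y hy hyU => (hyU.2.2.trans_le hy.2).false
  have hsub : K ∩ halfGe v c ∪ U ⊆ K ∩ halfGe v a := Set.union_subset
    (Set.inter_subset_inter_right K (halfGe_anti hac'.le))
    fun y hy => ⟨interior_subset hy.1, hy.2.1.le⟩
  have := (measure_union hdisj hUo.measurableSet).symm.trans_le ((measure_mono hsub).trans hle)
  exact (ENNReal.lt_add_right (measure_ne_top _ _) hU.ne').not_ge this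

theorem floatBody_eq_biInter {μ : Measure (EuclideanSpace ℝ (Fin n))} {δ : ℝ}
    {c : EuclideanSpace ℝ (Fin n) → ℝ}
    (hcap : ∀ v, ‖v‖ = 1 → μ (K ∩ halfGe v (c v)) = ENNReal.ofReal (δ ^ (((n : ℝ) + 1) / 2)))
    (hmin : ∀ v a, ‖v‖ = 1 → μ (K ∩ halfGe v a) ≤ μ (K ∩ halfGe v (c v)) → c v ≤ a) :
    floatBody μ K δ = ⋂ v ∈ {v : EuclideanSpace ℝ (Fin n) | ‖v‖ = 1}, halfLe v (c v) := by
  ext y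
  simp only [floatBody, Set.mem_sInter, Set.mem_iInter₂]
  constructor
  · exact fun hy v hv => hy _ ⟨v, c v, hv, (hcap v hv).le, rfl⟩
  · rintro hy _ ⟨v, a, hv, ha, rfl⟩
    exact (hy v hv).trans (hmin v a hv (ha.trans (hcap v hv).ge))

theorem exists_pos_eventually_le_measure_inter_halfGe {μ : Measure (EuclideanSpace ℝ (Fin n))}
    (hK : IsCompact K) (hKc : Convex ℝ K) (hint : (interior K).Nonempty)
    (hac : volume.restrict (interior K) ≪ μ.restrict (interior K)) {σ : ℝ} (hσ : 0 < σ)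
    (v₀ : EuclideanSpace ℝ (Fin n)) : ∃ m > 0, ∀ᶠ v in 𝓝[Metric.sphere 0 1] v₀,
      m ≤ μ (K ∩ halfGe v (suppFn K v - σ)) := by
  obtain ⟨w, hw, hwv₀⟩ := exists_mem_interior_inner_gt hKc hint
    (show suppFn K v₀ - σ / 2 < suppFn K v₀ by linarith)
  obtain ⟨τ, hτ, hball⟩ := Metric.isOpen_iff.1 isOpen_interior w hw
  set r := min τ (σ / 2)
  have hrK : Metric.ball w r ⊆ interior K :=
    (Metric.ball_subset_ball (min_le_left _ _)).trans hball
  refine ⟨μ (Metric.ball w r), measure_pos_of_isOpen_of_subset hac Metric.isOpen_ball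
    (Metric.nonempty_ball.2 (lt_min hτ (half_pos hσ))) hrK, ?_⟩
  have hcont : Continuous fun v => suppFn K v - ⟪w, v⟫_ℝ :=
    (continuous_suppFn hK).sub (by fun_prop)
  filter_upwards [self_mem_nhdsWithin, nhdsWithin_le_nhds
    (hcont.continuousAt.eventually (gt_mem_nhds (show _ < σ / 2 by linarith)))] with v hv hvw
  refine measure_mono fun y hy => ⟨interior_subset (hrK hy), ?_⟩
  have hyw : |⟪y - w, v⟫_ℝ| < σ / 2 := by
    calc |⟪y - w, v⟫_ℝ| ≤ ‖y - w‖ * ‖v‖ := abs_real_inner_le_norm _ _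
      _ < σ / 2 := by
        rw [mem_sphere_zero_iff_norm.1 hv, mul_one, ← dist_eq_norm]
        exact (Metric.mem_ball.1 hy).trans_le (min_le_right _ _)
  rw [inner_sub_left] at hyw
  show suppFn K v - σ ≤ ⟪y, v⟫_ℝ
  linarith [neg_abs_le (⟪y, v⟫_ℝ - ⟪w, v⟫_ℝ)]

theorem exists_pos_le_measure_inter_halfGe {μ : Measure (EuclideanSpace ℝ (Fin n))}
    (hK : IsCompact K) (hKc : Convex ℝ K) (hint : (interior K).Nonempty)
    (hac : volume.restrict (interior K) ≪ μ.restrict (interior K)) {σ : ℝ} (hσ : 0 < σ) :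
    ∃ m > 0, ∀ v, ‖v‖ = 1 → m ≤ μ (K ∩ halfGe v (suppFn K v - σ)) := by
  obtain ⟨m, hm, h⟩ := (isCompact_sphere 0 1).exists_pos_forall_le_of_eventually
    fun v₀ _ => exists_pos_eventually_le_measure_inter_halfGe hK hKc hint hac hσ v₀
  exact ⟨m, hm, fun v hv => h v (mem_sphere_zero_iff_norm.2 hv)⟩

theorem sphDist_self (hv : ‖v‖ = 1) : sphDist v v = 0 := by
  rw [sphDist, real_inner_self_eq_norm_sq, hv, one_pow, Real.arccos_one]

theorem exists_pos_add_le_suppFn_of_le_sphDist (hK : IsCompact K) {N : EuclideanSpace ℝ (Fin n)}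
    (hN : ‖N‖ = 1) (hNuniq : ∀ v : EuclideanSpace ℝ (Fin n), ‖v‖ = 1 →
      (∀ y ∈ K, ⟪y, v⟫_ℝ ≤ ⟪x, v⟫_ℝ) → v = N) {ε : ℝ} (hε : 0 < ε) :
    ∃ η > 0, ∀ v, ‖v‖ = 1 → ε ≤ sphDist v N → ⟪x, v⟫_ℝ + η ≤ suppFn K v := by
  have hS : IsCompact {v : EuclideanSpace ℝ (Fin n) | ‖v‖ = 1 ∧ ε ≤ sphDist v N} := by
    simp only [← mem_sphere_zero_iff_norm, Set.ofPred_and, Set.ofPred_mem_eq]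
    exact (isCompact_sphere 0 1).inter_right
      (isClosed_le continuous_const (Real.continuous_arccos.comp (by fun_prop)))
  obtain ⟨η, hη, h⟩ := hS.exists_forall_le' (f := fun v => suppFn K v - ⟪x, v⟫_ℝ) (a := 0)
    ((continuous_suppFn hK).sub (by fun_prop)).continuousOn fun v ⟨hv, hvN⟩ => by
      by_contra! hle
      have hvN' := hNuniq v hv fun y hy => by linarith [inner_le_suppFn hK hy v]
      rw [hvN', sphDist_self hN] at hvN
      linarith
  exact ⟨η, hη, fun v hv hvN => by linarith [h v ⟨hv, hvN⟩]⟩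

theorem ball_subset_biInter_halfLe {S : Set (EuclideanSpace ℝ (Fin n))}
    {b : EuclideanSpace ℝ (Fin n) → ℝ} {r : ℝ} (hS : ∀ v ∈ S, ‖v‖ = 1)
    (hb : ∀ v ∈ S, r ≤ b v) : Metric.ball 0 r ⊆ ⋂ v ∈ S, halfLe v (b v) := fun y hy =>
  Set.mem_iInter₂.2 fun v hv => by
    have := real_inner_le_norm y v
    rw [hS v hv, mul_one] at this
    exact this.trans ((mem_ball_zero_iff.1 hy).le.trans (hb v hv))

theorem ray_inter_halfLe_subset_segment {N : EuclideanSpace ℝ (Fin n)} {b : ℝ}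
    (hxN : 0 < ⟪x, N⟫_ℝ) (hb : b ≤ ⟪x, N⟫_ℝ) : ray x ∩ halfLe N b ⊆ segment ℝ 0 x := by
  rintro _ ⟨⟨t, ht, rfl⟩, hle⟩
  have hle' : t * ⟪x, N⟫_ℝ ≤ 1 * ⟪x, N⟫_ℝ := by
    rw [one_mul, ← real_inner_smul_left]
    exact le_trans hle hb
  exact ⟨1 - t, t, by linarith [le_of_mul_le_mul_right hle' hxN], ht, by ring, by simp⟩

theorem not_ray_subset_halfLe {N : EuclideanSpace ℝ (Fin n)} {b : ℝ} (hxN : 0 < ⟪x, N⟫_ℝ)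
    (hb : b ≤ ⟪x, N⟫_ℝ) : ¬ ray x ⊆ halfLe N b := fun h => by
  have h2x : ⟪(2 : ℝ) • x, N⟫_ℝ ≤ b := h ⟨2, zero_le_two, rfl⟩
  rw [real_inner_smul_left] at h2x
  linarith

theorem biInter_halfLe_inter_ray_eq {S T : Set (EuclideanSpace ℝ (Fin n))} (hST : S ⊆ T)
    {b : EuclideanSpace ℝ (Fin n) → ℝ} {N : EuclideanSpace ℝ (Fin n)} (hN : N ∈ S)
    (hxN : 0 < ⟪x, N⟫_ℝ) (hbN : b N ≤ ⟪x, N⟫_ℝ)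
    (hfar : ∀ v ∈ T, v ∉ S → 0 ≤ b v ∧ ⟪x, v⟫_ℝ ≤ b v) :
    (⋂ v ∈ S, halfLe v (b v)) ∩ ray x = (⋂ v ∈ T, halfLe v (b v)) ∩ ray x := by
  refine Set.Subset.antisymm ?_
    (Set.inter_subset_inter_left _ (Set.biInter_subset_biInter_left hST))
  rintro y ⟨hy, hray⟩
  rw [Set.mem_iInter₂] at hy
  have hseg := ray_inter_halfLe_subset_segment hxN hbN ⟨hray, hy N hN⟩
  refine ⟨Set.mem_iInter₂.2 fun v hv => ?_, hray⟩
  by_cases hvS : v ∈ S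
  · exact hy v hvS
  · obtain ⟨hb0, hxv⟩ := hfar v hv hvS
    exact (convex_halfLe v (b v)).segment_subset (by simpa [halfLe] using hb0) hxv hseg

theorem exists_frontier_inter_ray_eq_singleton {F : Set (EuclideanSpace ℝ (Fin n))}
    (hc : Convex ℝ F) (hcl : IsClosed F) (h0 : F ∈ 𝓝 0) (hx : ¬ ray x ⊆ F) :
    ∃ z, frontier F ∩ ray x = {z} ∧ segment ℝ 0 z = F ∩ ray x := by
  set g := gauge F x
  have hmem : ∀ t : ℝ, 0 ≤ t → (t • x ∈ F ↔ t * g ≤ 1) := fun t ht => by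
    rw [← smul_eq_mul, ← gauge_smul_of_nonneg ht, gauge_le_one_iff_mem_closure hc h0,
      hcl.closure_eq]
  have hfr : ∀ t : ℝ, 0 ≤ t → (t • x ∈ frontier F ↔ t * g = 1) := fun t ht => by
    rw [← smul_eq_mul, ← gauge_smul_of_nonneg ht, gauge_eq_one_iff_mem_frontier hc h0]
  have hg : 0 < g := (gauge_nonneg x).lt_of_ne fun hg0 =>
    hx fun _ ⟨t, ht, hy⟩ => hy ▸ (hmem t ht).2 (by simp [g, ← hg0])
  have hg' : 0 ≤ g⁻¹ := inv_nonneg.2 hg.le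
  refine ⟨g⁻¹ • x, Set.eq_singleton_iff_unique_mem.2
    ⟨⟨(hfr _ hg').2 (inv_mul_cancel₀ hg.ne'), g⁻¹, hg', rfl⟩, ?_⟩, ?_⟩
  · rintro _ ⟨hy, t, ht, rfl⟩
    rw [eq_inv_of_mul_eq_one_left ((hfr t ht).1 hy)]
  · ext y
    constructor
    · rintro ⟨a, b, ha, hb, hab, rfl⟩
      have hbg : 0 ≤ b * g⁻¹ := mul_nonneg hb hg'
      refine ⟨?_, b * g⁻¹, hbg, by simp [smul_smul]⟩
      rw [smul_zero, zero_add, smul_smul, hmem _ hbg, mul_assoc, inv_mul_cancel₀ hg.ne']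
      linarith
    · rintro ⟨hy, t, ht, rfl⟩
      have := (hmem t ht).1 hy
      exact ⟨1 - t * g, t * g, by linarith, by positivity, by ring,
        by simp [smul_smul, mul_assoc, mul_inv_cancel₀ hg.ne']⟩

theorem ray_structure_of_eq_biInter_halfLe {F S : Set (EuclideanSpace ℝ (Fin n))}
    {b : EuclideanSpace ℝ (Fin n) → ℝ} {N : EuclideanSpace ℝ (Fin n)} {r : ℝ}
    (hF : F = ⋂ v ∈ {v : EuclideanSpace ℝ (Fin n) | ‖v‖ = 1}, halfLe v (b v)) (hr : 0 < r)
    (hb : ∀ v, ‖v‖ = 1 → r ≤ b v) (hS : S ⊆ {v | ‖v‖ = 1}) (hN : N ∈ S)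
    (hxN : 0 < ⟪x, N⟫_ℝ) (hbN : b N ≤ ⟪x, N⟫_ℝ) (hfar : ∀ v, ‖v‖ = 1 → v ∉ S → ⟪x, v⟫_ℝ ≤ b v) :
    0 ∈ interior F ∧ ∃ z, z ∈ frontier F ∩ ray x ∧ (∀ y ∈ frontier F ∩ ray x, y = z) ∧
      segment ℝ 0 z = F ∩ ray x ∧ segment ℝ 0 z = (⋂ v ∈ S, halfLe v (b v)) ∩ ray x := by
  subst hF
  have hF0 := Filter.mem_of_superset (Metric.ball_mem_nhds 0 hr)
    (ball_subset_biInter_halfLe (fun v hv => hv) hb)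
  obtain ⟨z, hz, hseg⟩ := exists_frontier_inter_ray_eq_singleton
    (convex_iInter₂ fun v _ => convex_halfLe v (b v))
    (isClosed_biInter fun v _ => isClosed_halfLe v (b v)) hF0
    fun h => not_ray_subset_halfLe hxN hbN (h.trans (Set.biInter_subset_of_mem (hS hN)))
  rw [Set.eq_singleton_iff_unique_mem] at hz
  refine ⟨mem_interior_iff_mem_nhds.2 hF0, z, hz.1, hz.2, hseg, hseg.trans ?_⟩
  exact (biInter_halfLe_inter_ray_eq hS hN hxN hbN fun v hv hvS =>
    ⟨hr.le.trans (hb v hv), hfar v hv hvS⟩).symm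

end Euclidean

theorem stmt4_general {n : ℕ} (K : Set (EuclideanSpace ℝ (Fin n)))
    (hKcomp : IsCompact K) (hKconv : Convex ℝ K) (h0K : 0 ∈ interior K)
    (μ : Measure (EuclideanSpace ℝ (Fin n))) [IsFiniteMeasure μ]
    (hμsupp : μ (interior K)ᶜ = 0)
    (hac₂ : volume.restrict (interior K) ≪ μ.restrict (interior K))
    (x N : EuclideanSpace ℝ (Fin n))
    (hx : x ∈ frontier K) (hN : ‖N‖ = 1)
    (hNsupp : ∀ y ∈ K, ⟪y, N⟫_ℝ ≤ ⟪x, N⟫_ℝ)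
    (hNuniq : ∀ v : EuclideanSpace ℝ (Fin n), ‖v‖ = 1 →
      (∀ y ∈ K, ⟪y, v⟫_ℝ ≤ ⟪x, v⟫_ℝ) → v = N)
    (s : ℝ → EuclideanSpace ℝ (Fin n) → ℝ)
    (hs : ∀ δ ∈ Set.Ioo (0 : ℝ) ((μ K).toReal ^ ((2 : ℝ) / (n + 1))),
      ∀ v : EuclideanSpace ℝ (Fin n), ‖v‖ = 1 →
        μ (K ∩ halfGe v (suppFn K v - s δ v)) = ENNReal.ofReal (δ ^ (((n : ℝ) + 1) / 2))) :
    ∀ ε > (0 : ℝ), ∃ δε > (0 : ℝ), δε ≤ (μ K).toReal ^ ((2 : ℝ) / (n + 1)) ∧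
      ∀ δ ∈ Set.Ioo (0 : ℝ) δε,
        0 ∈ interior (floatBody μ K δ) ∧
        ∃ xδ : EuclideanSpace ℝ (Fin n),
          xδ ∈ frontier (floatBody μ K δ) ∩ ray x ∧
          (∀ y ∈ frontier (floatBody μ K δ) ∩ ray x, y = xδ) ∧
          segment ℝ 0 xδ = floatBody μ K δ ∩ ray x ∧
          segment ℝ 0 xδ =
            (⋂ v ∈ {v : EuclideanSpace ℝ (Fin n) | ‖v‖ = 1 ∧ sphDist v N < ε},
              halfLe v (suppFn K v - s δ v)) ∩ ray x := by
  intro ε hε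
  have hint : (interior K).Nonempty := ⟨0, h0K⟩
  obtain ⟨ρ, hρ, hρK⟩ :=
    Metric.nhds_basis_closedBall.mem_iff.1 (mem_interior_iff_mem_nhds.1 h0K)
  have hρh : ∀ v, ‖v‖ = 1 → ρ ≤ suppFn K v :=
    fun v hv => le_suppFn_of_closedBall_subset hKcomp hρ.le hρK hv
  have hxN : ⟪x, N⟫_ℝ = suppFn K N :=
    (inner_le_suppFn hKcomp (hKcomp.isClosed.frontier_subset hx) N).antisymm
      (suppFn_le (hint.mono interior_subset) hNsupp)
  obtain ⟨η, hη, hfar⟩ := exists_pos_add_le_suppFn_of_le_sphDist hKcomp hN hNuniq hε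
  obtain ⟨m, hm, hcap⟩ := exists_pos_le_measure_inter_halfGe hKcomp hKconv hint hac₂
    (lt_min (half_pos hρ) hη)
  have hμK : 0 < (μ K).toReal := ENNReal.toReal_pos ((measure_pos_of_isOpen_of_subset hac₂
    isOpen_interior hint subset_rfl).trans_le (measure_mono interior_subset)).ne'
    (measure_ne_top μ K)
  obtain ⟨δε, hδε, hδεP, hsmall⟩ :=
    exists_pos_le_forall_ofReal_rpow_lt hm (e := ((n : ℝ) + 1) / 2) (by positivity)
      (Real.rpow_pos_of_pos hμK _)
  refine ⟨δε, hδε, hδεP, fun δ hδ => ?_⟩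
  have hδD := hs δ ⟨hδ.1, hδ.2.trans_le hδεP⟩
  have hsδ : ∀ v, ‖v‖ = 1 → 0 < s δ v ∧ s δ v < min (ρ / 2) η := fun v hv =>
    ⟨pos_of_measure_inter_halfGe_ne_zero hKcomp hμsupp (norm_ne_zero_iff.1 (by simp [hv]))
      ((hδD v hv).trans_ne (ENNReal.ofReal_pos.2 (Real.rpow_pos_of_pos hδ.1 _)).ne'),
    lt_of_measure_inter_halfGe_sub_lt ((hδD v hv).trans_lt ((hsmall δ hδ).trans_le (hcap v hv)))⟩
  have hb : ∀ v, ‖v‖ = 1 → ρ / 2 ≤ suppFn K v - s δ v := fun v hv => by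
    linarith [hρh v hv, hsδ v hv, min_le_left (ρ / 2) η]
  refine ray_structure_of_eq_biInter_halfLe (floatBody_eq_biInter hδD fun v a hv =>
      le_of_measure_inter_halfGe_le hKconv h0K hac₂ (by linarith [hb v hv])
        (by linarith [hsδ v hv]))
    (half_pos hρ) hb (fun v hv => hv.1) ⟨hN, by rwa [sphDist_self hN]⟩
    (by linarith [hρh N hN]) (by linarith [hsδ N hN]) fun v hv hvS => ?_
  linarith [hfar v hv (not_lt.1 fun h => hvS ⟨hv, h⟩), hsδ v hv, min_le_right (ρ / 2) η]

/-- Locality of the weighted floating body at a regular boundary point. -/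
theorem stmt4 {n : ℕ} (K : Set (EuclideanSpace ℝ (Fin n)))
    (hKcomp : IsCompact K) (hKconv : Convex ℝ K) (h0K : 0 ∈ interior K)
    (μ : Measure (EuclideanSpace ℝ (Fin n))) [IsFiniteMeasure μ]
    (hμsupp : μ (interior K)ᶜ = 0)
    (hac₁ : μ.restrict (interior K) ≪ volume.restrict (interior K))
    (hac₂ : volume.restrict (interior K) ≪ μ.restrict (interior K))
    (x N : EuclideanSpace ℝ (Fin n))
    (hx : x ∈ frontier K) (hN : ‖N‖ = 1)
    (hNsupp : ∀ y ∈ K, ⟪y, N⟫_ℝ ≤ ⟪x, N⟫_ℝ)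
    (hNuniq : ∀ v : EuclideanSpace ℝ (Fin n), ‖v‖ = 1 →
      (∀ y ∈ K, ⟪y, v⟫_ℝ ≤ ⟪x, v⟫_ℝ) → v = N)
    (s : ℝ → EuclideanSpace ℝ (Fin n) → ℝ)
    (hs : ∀ δ ∈ Set.Ioo (0 : ℝ) ((μ K).toReal ^ ((2 : ℝ) / (n + 1))),
      ∀ v : EuclideanSpace ℝ (Fin n), ‖v‖ = 1 →
        μ (K ∩ halfGe v (suppFn K v - s δ v)) = ENNReal.ofReal (δ ^ (((n : ℝ) + 1) / 2))) :
    ∀ ε > (0 : ℝ), ∃ δε > (0 : ℝ), δε ≤ (μ K).toReal ^ ((2 : ℝ) / (n + 1)) ∧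
      ∀ δ ∈ Set.Ioo (0 : ℝ) δε,
        0 ∈ interior (floatBody μ K δ) ∧
        ∃ xδ : EuclideanSpace ℝ (Fin n),
          xδ ∈ frontier (floatBody μ K δ) ∩ ray x ∧
          (∀ y ∈ frontier (floatBody μ K δ) ∩ ray x, y = xδ) ∧
          segment ℝ 0 xδ = floatBody μ K δ ∩ ray x ∧
          segment ℝ 0 xδ =
            (⋂ v ∈ {v : EuclideanSpace ℝ (Fin n) | ‖v‖ = 1 ∧ sphDist v N < ε},
              halfLe v (suppFn K v - s δ v)) ∩ ray x :=
  stmt4_general K hKcomp hKconv h0K μ hμsupp hac₂ x N hx hN hNsupp hNuniq s hs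
end
end

section
/- Let f_i : S^{n-1} → (0,∞) be a sequence of positive continuous functions converging uniformly to a positive continuous function f, and let x be a regular boundary point of the Wulff shape [f] with unique outer unit normal N_x. For each i let x_i be the unique point of pos{x} ∩ bd [f_i]. Then the spherical images σ([f_i], x_i) converge to the singleton {N_x} in the spherical Hausdorff distance; equivalently, sup{d_s(v, N_x) : v ∈ σ([f_i], x_i)} → 0 as i → ∞. -/
/-! Write `x_i = t_i x`. Testing `x_i ∈ [f_i]` against `N_x`, and testing an active constraint of
`[f_i]` at `x_i` against `[f]`, gives `|t_i - 1| < δ / min f` as soon as `|f_i - f| < δ`, so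
`x_i → x`. Since `r [f] ⊆ [f_i]` eventually for every `r < 1`, a limit `w` of normals
`u_k ∈ σ([f_{i_k}], x_{i_k})` is an outer normal of `[f]` at `x`, hence `w = N_x` by regularity.
Compactness of the sphere turns this into `σ([f_i], x_i) → {N_x}`. -/

open MeasureTheory Filter
open scoped InnerProductSpace ENNReal Topology

noncomputable section

/-- The Wulff shape `[f] = ⋂_{‖v‖=1} {y : ⟪y, v⟫ ≤ f v}`. -/
def wulff {n : ℕ} (f : EuclideanSpace ℝ (Fin n) → ℝ) : Set (EuclideanSpace ℝ (Fin n)) :=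
  ⋂ v ∈ {v : EuclideanSpace ℝ (Fin n) | ‖v‖ = 1}, halfLe v (f v)

/-- The spherical image `σ(K,x)`: the set of outer unit normal vectors of `K` at `x`. -/
def sphImg {n : ℕ} (K : Set (EuclideanSpace ℝ (Fin n))) (x : EuclideanSpace ℝ (Fin n)) :
    Set (EuclideanSpace ℝ (Fin n)) :=
  {v | ‖v‖ = 1 ∧ ∀ y ∈ K, ⟪y, v⟫_ℝ ≤ ⟪x, v⟫_ℝ}

theorem IsCompact.eventually_subset_of_subseq_tendsto {X : Type*} [TopologicalSpace X]
    [FirstCountableTopology X] {K : Set X} (hK : IsCompact K) {A : ℕ → Set X}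
    (hAK : ∀ i, A i ⊆ K) {N : X}
    (hlim : ∀ φ : ℕ → ℕ, StrictMono φ → ∀ u : ℕ → X, (∀ k, u k ∈ A (φ k)) →
      ∀ w, Tendsto u atTop (𝓝 w) → w = N)
    {U : Set X} (hU : U ∈ 𝓝 N) : ∀ᶠ i in atTop, A i ⊆ U := by
  by_contra hne
  have hbad : ∃ᶠ i in atTop, ∃ u ∈ A i, u ∉ U := by
    simpa only [not_eventually, Set.not_subset] using hne
  obtain ⟨φ, hφ, hφbad⟩ := extraction_of_frequently_atTop hbad
  choose u huA huU using hφbad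
  obtain ⟨w, -, ψ, hψ, hw⟩ := hK.tendsto_subseq fun k => hAK _ (huA k)
  obtain rfl := hlim (φ ∘ ψ) (hφ.comp hψ) (u ∘ ψ) (fun k => huA (ψ k)) w hw
  obtain ⟨k, hk⟩ := (hw.eventually hU).exists
  exact huU (ψ k) hk

theorem tendsto_sSup_image_nhds_zero {X ι : Type*} {l : Filter ι} {g : X → ℝ}
    (hg : ∀ v, 0 ≤ g v) {A : ι → Set X} (hA : ∀ ε > 0, ∀ᶠ i in l, ∀ v ∈ A i, g v ≤ ε) :
    Tendsto (fun i => sSup (g '' A i)) l (𝓝 0) := by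
  rw [Metric.tendsto_nhds]
  intro ε hε
  filter_upwards [hA (ε / 2) (half_pos hε)] with i hi
  have hle : sSup (g '' A i) ≤ ε / 2 := Real.sSup_le (by simpa using hi) (half_pos hε).le
  have hnonneg : 0 ≤ sSup (g '' A i) := Real.sSup_nonneg (by simp [hg])
  rw [Real.dist_eq, sub_zero, abs_of_nonneg hnonneg]
  linarith

theorem abs_sub_one_lt_of_mul_lt {t m a b ε : ℝ} (hm : 0 < m) (ha : m ≤ a) (hb : m ≤ b)
    (h₁ : (t - 1) * a < ε * m) (h₂ : (1 - t) * b < ε * m) : |t - 1| < ε := by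
  have key : |t - 1| * m < ε * m := by
    rcases le_total 1 t with h | h
    · rw [abs_of_nonneg (sub_nonneg.2 h)]
      exact (mul_le_mul_of_nonneg_left ha (sub_nonneg.2 h)).trans_lt h₁
    · rw [abs_of_nonpos (sub_nonpos.2 h), neg_sub]
      exact (mul_le_mul_of_nonneg_left hb (sub_nonneg.2 h)).trans_lt h₂
  exact lt_of_mul_lt_mul_right key hm.le

section Wulff

variable {n : ℕ}

theorem mem_wulff_iff {g : EuclideanSpace ℝ (Fin n) → ℝ} {y : EuclideanSpace ℝ (Fin n)} :
    y ∈ wulff g ↔ ∀ v : EuclideanSpace ℝ (Fin n), ‖v‖ = 1 → ⟪y, v⟫_ℝ ≤ g v := by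
  simp [wulff, halfLe]

theorem isClosed_wulff (g : EuclideanSpace ℝ (Fin n) → ℝ) : IsClosed (wulff g) :=
  isClosed_biInter fun _ _ => isClosed_le (continuous_id.inner continuous_const) continuous_const

theorem mem_wulff_of_mem_frontier {g : EuclideanSpace ℝ (Fin n) → ℝ}
    {y : EuclideanSpace ℝ (Fin n)} (hy : y ∈ frontier (wulff g)) : y ∈ wulff g :=
  (isClosed_wulff g).frontier_subset hy

theorem exists_pos_le_of_continuousOn_sphere {g : EuclideanSpace ℝ (Fin n) → ℝ}
    (hg : ContinuousOn g (Metric.sphere 0 1))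
    (hpos : ∀ v : EuclideanSpace ℝ (Fin n), ‖v‖ = 1 → 0 < g v) :
    ∃ m > 0, ∀ v : EuclideanSpace ℝ (Fin n), ‖v‖ = 1 → m ≤ g v := by
  obtain ⟨m, hm, hle⟩ := (isCompact_sphere (0 : EuclideanSpace ℝ (Fin n)) 1).exists_forall_le'
    hg fun v hv => hpos v (mem_sphere_zero_iff_norm.1 hv)
  exact ⟨m, hm, fun v hv => hle v (mem_sphere_zero_iff_norm.2 hv)⟩

theorem exists_le_inner_of_mem_frontier_wulff {g : EuclideanSpace ℝ (Fin n) → ℝ}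
    (hg : ContinuousOn g (Metric.sphere 0 1)) {y : EuclideanSpace ℝ (Fin n)}
    (hy : y ∈ frontier (wulff g)) : ∃ v : EuclideanSpace ℝ (Fin n), ‖v‖ = 1 ∧ g v ≤ ⟪y, v⟫_ℝ := by
  by_contra! hslack
  obtain ⟨m, hm, hmle⟩ := exists_pos_le_of_continuousOn_sphere (g := fun v => g v - ⟪y, v⟫_ℝ)
    (hg.sub (continuous_const.inner continuous_id).continuousOn) fun v hv => sub_pos.2 (hslack v hv)
  have hball : Metric.ball y m ⊆ wulff g := by
    intro z hz
    rw [mem_wulff_iff]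
    intro v hv
    have hzy : ⟪z - y, v⟫_ℝ < m :=
      calc ⟪z - y, v⟫_ℝ ≤ ‖z - y‖ * ‖v‖ := real_inner_le_norm _ _
        _ < m := by rwa [hv, mul_one, ← dist_eq_norm]
    rw [inner_sub_left] at hzy
    linarith [hmle v hv]
  exact hy.2 (mem_interior.2 ⟨_, hball, Metric.isOpen_ball, Metric.mem_ball_self hm⟩)

theorem inner_eq_of_forall_normal_eq {g : EuclideanSpace ℝ (Fin n) → ℝ}
    (hg : ContinuousOn g (Metric.sphere 0 1)) {x N : EuclideanSpace ℝ (Fin n)}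
    (hx : x ∈ frontier (wulff g))
    (hN : ∀ v : EuclideanSpace ℝ (Fin n), ‖v‖ = 1 →
      (∀ y ∈ wulff g, ⟪y, v⟫_ℝ ≤ ⟪x, v⟫_ℝ) → v = N) :
    ⟪x, N⟫_ℝ = g N := by
  obtain ⟨u, hu, hgu⟩ := exists_le_inner_of_mem_frontier_wulff hg hx
  have hxu : ⟪x, u⟫_ℝ = g u :=
    le_antisymm (mem_wulff_iff.1 (mem_wulff_of_mem_frontier hx) u hu) hgu
  obtain rfl := hN u hu fun y hy => hxu ▸ mem_wulff_iff.1 hy u hu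
  exact hxu

theorem smul_mem_wulff {g h : EuclideanSpace ℝ (Fin n) → ℝ} {m r : ℝ}
    (hm : ∀ v : EuclideanSpace ℝ (Fin n), ‖v‖ = 1 → m ≤ g v) (hr₀ : 0 ≤ r) (hr₁ : r ≤ 1)
    (hgh : ∀ v : EuclideanSpace ℝ (Fin n), ‖v‖ = 1 → g v - (1 - r) * m ≤ h v)
    {y : EuclideanSpace ℝ (Fin n)} (hy : y ∈ wulff g) : r • y ∈ wulff h := by
  rw [mem_wulff_iff] at hy ⊢
  intro v hv
  rw [real_inner_smul_left]
  nlinarith [hy v hv, hm v hv, hgh v hv]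

theorem setOf_sphDist_lt_mem_nhds {N : EuclideanSpace ℝ (Fin n)} (hN : ‖N‖ = 1) {ε : ℝ}
    (hε : 0 < ε) : {v | sphDist v N < ε} ∈ 𝓝 N := by
  have hcont : Continuous fun v => sphDist v N :=
    Real.continuous_arccos.comp (continuous_id.inner continuous_const)
  have hNN : sphDist N N = 0 := by
    rw [sphDist, real_inner_self_eq_norm_sq, hN, one_pow, Real.arccos_one]
  exact hcont.continuousAt.preimage_mem_nhds (Iio_mem_nhds (hNN ▸ hε))

theorem mem_sphImg_of_tendsto {ι : Type*} {l : Filter ι} [l.NeBot]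
    {K : ι → Set (EuclideanSpace ℝ (Fin n))} {L : Set (EuclideanSpace ℝ (Fin n))}
    (hK : ∀ y ∈ L, ∀ᶠ r in 𝓝[<] (1 : ℝ), ∀ᶠ i in l, r • y ∈ K i)
    {y : ι → EuclideanSpace ℝ (Fin n)} {x : EuclideanSpace ℝ (Fin n)} (hy : Tendsto y l (𝓝 x))
    {u : ι → EuclideanSpace ℝ (Fin n)} (hu : ∀ i, u i ∈ sphImg (K i) (y i))
    {w : EuclideanSpace ℝ (Fin n)} (hw : Tendsto u l (𝓝 w)) : w ∈ sphImg L x := by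
  refine ⟨?_, fun z hz => ?_⟩
  · have := (Metric.isClosed_sphere (x := (0 : EuclideanSpace ℝ (Fin n))) (ε := 1)).mem_of_tendsto
      hw (Eventually.of_forall fun i => mem_sphere_zero_iff_norm.2 (hu i).1)
    exact mem_sphere_zero_iff_norm.1 this
  · have hscaled : ∀ᶠ r in 𝓝[<] (1 : ℝ), r * ⟪z, w⟫_ℝ ≤ ⟪x, w⟫_ℝ := by
      filter_upwards [hK z hz] with r hr
      rw [← real_inner_smul_left]
      exact le_of_tendsto_of_tendsto (tendsto_const_nhds.inner hw) (hy.inner hw)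
        (hr.mono fun i hi => (hu i).2 _ hi)
    have hlim : Tendsto (fun r : ℝ => r * ⟪z, w⟫_ℝ) (𝓝[<] 1) (𝓝 ⟪z, w⟫_ℝ) := by
      simpa using ((continuous_mul_const _).tendsto (1 : ℝ)).mono_left nhdsWithin_le_nhds
    exact le_of_tendsto hlim hscaled

variable {ι : Type*} {l : Filter ι} {f : ι → EuclideanSpace ℝ (Fin n) → ℝ}
  {flim : EuclideanSpace ℝ (Fin n) → ℝ} {m : ℝ}

theorem eventually_smul_mem_wulff (hunif : TendstoUniformlyOn f flim l (Metric.sphere 0 1))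
    (hm : 0 < m) (hmle : ∀ v : EuclideanSpace ℝ (Fin n), ‖v‖ = 1 → m ≤ flim v)
    {y : EuclideanSpace ℝ (Fin n)} (hy : y ∈ wulff flim) {r : ℝ} (hr₀ : 0 ≤ r) (hr₁ : r < 1) :
    ∀ᶠ i in l, r • y ∈ wulff (f i) := by
  have hδ : 0 < (1 - r) * m := mul_pos (sub_pos.2 hr₁) hm
  filter_upwards [Metric.tendstoUniformlyOn_iff.1 hunif _ hδ] with i hi
  refine smul_mem_wulff hmle hr₀ hr₁.le (fun v hv => ?_) hy
  have := hi v (mem_sphere_zero_iff_norm.2 hv)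
  rw [Real.dist_eq, abs_lt] at this
  linarith

theorem tendsto_one_of_smul_mem_frontier_wulff
    (hfc : ∀ i, ContinuousOn (f i) (Metric.sphere 0 1))
    (hunif : TendstoUniformlyOn f flim l (Metric.sphere 0 1)) (hm : 0 < m)
    (hmle : ∀ v : EuclideanSpace ℝ (Fin n), ‖v‖ = 1 → m ≤ flim v)
    {x N : EuclideanSpace ℝ (Fin n)} (hx : x ∈ wulff flim) (hN : ‖N‖ = 1)
    (hxN : ⟪x, N⟫_ℝ = flim N) {t : ι → ℝ} (ht₀ : ∀ i, 0 ≤ t i)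
    (ht : ∀ i, t i • x ∈ frontier (wulff (f i))) : Tendsto t l (𝓝 1) := by
  rw [Metric.tendsto_nhds]
  intro ε hε
  have hδ : 0 < ε * m := mul_pos hε hm
  filter_upwards [Metric.tendstoUniformlyOn_iff.1 hunif _ hδ] with i hi
  have hclose : ∀ v : EuclideanSpace ℝ (Fin n), ‖v‖ = 1 → |flim v - f i v| < ε * m :=
    fun v hv => by simpa only [Real.dist_eq] using hi v (mem_sphere_zero_iff_norm.2 hv)
  have hupper : (t i - 1) * flim N < ε * m := by
    have hin : t i * flim N ≤ f i N := by
      simpa only [real_inner_smul_left, hxN] using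
        mem_wulff_iff.1 (mem_wulff_of_mem_frontier (ht i)) N hN
    linarith [(abs_lt.1 (hclose N hN)).1]
  obtain ⟨v, hv, hfv⟩ := exists_le_inner_of_mem_frontier_wulff (hfc i) (ht i)
  have hlower : (1 - t i) * flim v < ε * m := by
    have hout : f i v ≤ t i * flim v := by
      rw [real_inner_smul_left] at hfv
      exact hfv.trans (mul_le_mul_of_nonneg_left (mem_wulff_iff.1 hx v hv) (ht₀ i))
    linarith [(abs_lt.1 (hclose v hv)).2]
  rw [Real.dist_eq]
  exact abs_sub_one_lt_of_mul_lt hm (hmle N hN) (hmle v hv) hupper hlower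

theorem mem_sphImg_wulff_of_tendsto (hunif : TendstoUniformlyOn f flim l (Metric.sphere 0 1))
    (hm : 0 < m) (hmle : ∀ v : EuclideanSpace ℝ (Fin n), ‖v‖ = 1 → m ≤ flim v)
    {y : ι → EuclideanSpace ℝ (Fin n)} {x : EuclideanSpace ℝ (Fin n)} (hy : Tendsto y l (𝓝 x))
    {φ : ℕ → ι} (hφ : Tendsto φ atTop l) {u : ℕ → EuclideanSpace ℝ (Fin n)}
    (hu : ∀ k, u k ∈ sphImg (wulff (f (φ k))) (y (φ k))) {w : EuclideanSpace ℝ (Fin n)}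
    (hw : Tendsto u atTop (𝓝 w)) : w ∈ sphImg (wulff flim) x := by
  refine mem_sphImg_of_tendsto (fun z hz => ?_) (hy.comp hφ) hu hw
  filter_upwards [Ioo_mem_nhdsLT one_pos] with r hr
  exact hφ.eventually (eventually_smul_mem_wulff hunif hm hmle hz hr.1.le hr.2)

end Wulff

theorem stmt6_general {n : ℕ} (f : ℕ → EuclideanSpace ℝ (Fin n) → ℝ)
    (flim : EuclideanSpace ℝ (Fin n) → ℝ)
    (hfc : ∀ i, ContinuousOn (f i) (Metric.sphere (0 : EuclideanSpace ℝ (Fin n)) 1))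
    (hflimc : ContinuousOn flim (Metric.sphere (0 : EuclideanSpace ℝ (Fin n)) 1))
    (hflimpos : ∀ v : EuclideanSpace ℝ (Fin n), ‖v‖ = 1 → 0 < flim v)
    (hunif : TendstoUniformlyOn f flim atTop
      (Metric.sphere (0 : EuclideanSpace ℝ (Fin n)) 1))
    (x N : EuclideanSpace ℝ (Fin n))
    (hx : x ∈ frontier (wulff flim)) (hN : ‖N‖ = 1)
    (hNuniq : ∀ v : EuclideanSpace ℝ (Fin n), ‖v‖ = 1 →
      (∀ y ∈ wulff flim, ⟪y, v⟫_ℝ ≤ ⟪x, v⟫_ℝ) → v = N)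
    (xi : ℕ → EuclideanSpace ℝ (Fin n))
    (hxi : ∀ i, xi i ∈ ray x ∧ xi i ∈ frontier (wulff (f i))) :
    Tendsto (fun i => sSup ((fun v => sphDist v N) '' sphImg (wulff (f i)) (xi i)))
      atTop (𝓝 0) := by
  obtain ⟨m, hm, hmle⟩ := exists_pos_le_of_continuousOn_sphere hflimc hflimpos
  choose t ht₀ hxt using fun i => (hxi i).1
  have hxi_lim : Tendsto xi atTop (𝓝 x) := by
    have ht := tendsto_one_of_smul_mem_frontier_wulff hfc hunif hm hmle
      (mem_wulff_of_mem_frontier hx) hN (inner_eq_of_forall_normal_eq hflimc hx hNuniq) ht₀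
      fun i => hxt i ▸ (hxi i).2
    simpa only [one_smul, ← hxt] using ht.smul_const x
  refine tendsto_sSup_image_nhds_zero (fun v => Real.arccos_nonneg _) fun ε hε => ?_
  have hS := isCompact_sphere (0 : EuclideanSpace ℝ (Fin n)) 1
  have hnormals := hS.eventually_subset_of_subseq_tendsto
    (A := fun i => sphImg (wulff (f i)) (xi i)) (fun i v hv => mem_sphere_zero_iff_norm.2 hv.1)
    (fun φ hφ u hu w hw =>
      have hw' := mem_sphImg_wulff_of_tendsto hunif hm hmle hxi_lim hφ.tendsto_atTop hu hw
      hNuniq w hw'.1 hw'.2)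
    (setOf_sphDist_lt_mem_nhds hN hε)
  filter_upwards [hnormals] with i hi v hv using (hi hv).le

/-- Convergence of the spherical images (normal cones) for a convergent
sequence of Wulff shapes. -/
theorem stmt6 {n : ℕ} (f : ℕ → EuclideanSpace ℝ (Fin n) → ℝ)
    (flim : EuclideanSpace ℝ (Fin n) → ℝ)
    (hfc : ∀ i, ContinuousOn (f i) (Metric.sphere (0 : EuclideanSpace ℝ (Fin n)) 1))
    (hfpos : ∀ i, ∀ v : EuclideanSpace ℝ (Fin n), ‖v‖ = 1 → 0 < f i v)
    (hflimc : ContinuousOn flim (Metric.sphere (0 : EuclideanSpace ℝ (Fin n)) 1))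
    (hflimpos : ∀ v : EuclideanSpace ℝ (Fin n), ‖v‖ = 1 → 0 < flim v)
    (hunif : TendstoUniformlyOn f flim atTop
      (Metric.sphere (0 : EuclideanSpace ℝ (Fin n)) 1))
    (x N : EuclideanSpace ℝ (Fin n))
    (hx : x ∈ frontier (wulff flim)) (hN : ‖N‖ = 1)
    (hNsupp : ∀ y ∈ wulff flim, ⟪y, N⟫_ℝ ≤ ⟪x, N⟫_ℝ)
    (hNuniq : ∀ v : EuclideanSpace ℝ (Fin n), ‖v‖ = 1 →
      (∀ y ∈ wulff flim, ⟪y, v⟫_ℝ ≤ ⟪x, v⟫_ℝ) → v = N)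
    (xi : ℕ → EuclideanSpace ℝ (Fin n))
    (hxi : ∀ i, xi i ∈ ray x ∧ xi i ∈ frontier (wulff (f i))) :
    Tendsto (fun i => sSup ((fun v => sphDist v N) '' sphImg (wulff (f i)) (xi i)))
      atTop (𝓝 0) :=
  stmt6_general f flim hfc hflimc hflimpos hunif x N hx hN hNuniq xi hxi
end
end
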